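/- Let m be a positive integer and F a finite set of faces (unordered triples of distinct indices in Fin m) such that every edge index lies in at least one face and the graph on faces with adjacency given by sharing an edge is connected. Let u, ũ : Fin m → ℝ be admissible metrics (positive, and for each face the square roots satisfy the strict triangle inequalities) with Σ_e u_e = Σ_e ũ_e = m. If the cotangent edge weights agree, w_e(u) = w_e(ũ) for all e ∈ Fin m, then u = ũ. -/

import Mathlib

/-- `u` is an admissible metric: `u_e > 0` for every edge, and on each face the
lengths `d_e = √(2 u_e)` satisfy the strict triangle inequalities. -/
def AdmissibleMetric (m : ℕ) (F : Finset (Finset (Fin m))) (u : Fin m → ℝ) : Prop :=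
  (∀ e, 0 < u e) ∧
  ∀ f ∈ F, ∀ i ∈ f, ∀ j ∈ f, ∀ k ∈ f, i ≠ j → i ≠ k → j ≠ k →
    Real.sqrt (2 * u i) < Real.sqrt (2 * u j) + Real.sqrt (2 * u k)

/-- The angle opposite edge `e` in face `f`, determined by the law of cosines:
`cos θ_i = (d_j² + d_k² − d_i²)/(2 d_j d_k)` where `{j,k} = f \ {e}` and
`d_a = √(2 u_a)` (so `d_a² = 2 u_a`). -/
noncomputable def faceAngle (m : ℕ) (u : Fin m → ℝ) (f : Finset (Fin m)) (e : Fin m) : ℝ :=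
  Real.arccos ((∑ a ∈ f.erase e, 2 * u a - 2 * u e) /
    (2 * ∏ a ∈ f.erase e, Real.sqrt (2 * u a)))

/-- The cotangent edge weight `w_e(u) = (1/2) Σ_{f ∈ F, e ∈ f} cot θ_e^f`. -/
noncomputable def cotWeight (m : ℕ) (F : Finset (Finset (Fin m)))
    (u : Fin m → ℝ) (e : Fin m) : ℝ :=
  (1 / 2) * ∑ f ∈ F.filter (fun f => e ∈ f), Real.cot (faceAngle m u f e)

/-- The adjacency graph on the faces: two faces are adjacent when they are
distinct and share an edge index. -/
def faceGraph (m : ℕ) (F : Finset (Finset (Fin m))) :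
    SimpleGraph {f : Finset (Fin m) // f ∈ F} where
  Adj a b := a ≠ b ∧ ((a : Finset (Fin m)) ∩ (b : Finset (Fin m))).Nonempty
  symm := by
    constructor
    rintro a b ⟨hab, hint⟩
    exact ⟨hab.symm, by rwa [Finset.inter_comm]⟩
  loopless := by
    constructor
    rintro a ⟨hne, -⟩
    exact hne rfl

/-!
Write `a, b, c` for the squared side lengths `2 u_e` of a face and `Q(a, b, c)` for sixteen times
its squared area; then the cotangent opposite `a` is `(b + c - a) / √Q`. For two metrics on the
same face, `∑ (cot θ_e(u) - cot θ_e(ũ)) (a_e - ã_e) = (S + S̃)(S S̃ - B) / (S S̃)` with `S = √Q`,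
`S̃ = √Q̃` and `B` the polar form of `Q`. As `Q` has Lorentzian signature, the reverse
Cauchy–Schwarz inequality `B ≥ S S̃` holds, with equality only for proportional triples. Summed
over all faces the left side becomes `4 ∑_e (w_e(u) - w_e(ũ)) (u_e - ũ_e) = 0`, so `u` and `ũ` are
proportional on every face; faces sharing an edge share the factor, so connectivity makes it
global, and the normalization forces it to be `1`.
-/

open Real Finset

/-- Sixteen times the squared area of a triangle with squared side lengths `a`, `b`, `c`. -/
def heron (a b c : ℝ) : ℝ := 2 * (a * b + b * c + c * a) - a ^ 2 - b ^ 2 - c ^ 2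

/-- The polar form of `heron`. -/
def heronPolar (a b c a' b' c' : ℝ) : ℝ := (b + c - a) * a' + (a + c - b) * b' + (a + b - c) * c'

/-- The cotangent of the angle opposite `√a` in the triangle with sides `√a`, `√b`, `√c`. -/
noncomputable def heronCot (a b c : ℝ) : ℝ := (b + c - a) / √(heron a b c)

section Heron

variable {a b c a' b' c' : ℝ}

lemma heron_swap : heron b a c = heron a b c := by unfold heron; ring

lemma heron_rotate : heron c a b = heron a b c := by unfold heron; ring

lemma heron_sq (x y z : ℝ) :
    heron (x ^ 2) (y ^ 2) (z ^ 2) = (x + y + z) * (y + z - x) * (x + z - y) * (x + y - z) := by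
  unfold heron; ring

lemma heron_pos_of_lt_add {x y z : ℝ} (hx : x < y + z) (hy : y < x + z) (hz : z < x + y) :
    0 < heron (x ^ 2) (y ^ 2) (z ^ 2) := by
  rw [heron_sq]
  have := add_lt_add (add_lt_add (sub_pos.2 hx) (sub_pos.2 hy)) (sub_pos.2 hz)
  apply mul_pos (mul_pos (mul_pos _ _) _) _ <;> linarith

/-- Equality case of reverse Cauchy–Schwarz: with `s = a + b + c` and `s' = a' + b' + c'`, the
triple `s' (a, b, c) - s (a', b', c')` has zero sum, where `heron` is negative definite, whereas
the hypothesis makes `heron` nonnegative on it. -/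
lemma proportional_of_heronPolar_le {S S' : ℝ} (hss : 0 ≤ (a + b + c) * (a' + b' + c'))
    (hS : S ^ 2 = heron a b c) (hS' : S' ^ 2 = heron a' b' c')
    (h : heronPolar a b c a' b' c' ≤ S * S') :
    (a' + b' + c') * a = (a + b + c) * a' ∧ (a' + b' + c') * b = (a + b + c) * b' ∧
      (a' + b' + c') * c = (a + b + c) * c' := by
  set s := a + b + c
  set s' := a' + b' + c'
  have hneg : heron (s' * a - s * a') (s' * b - s * b') (s' * c - s * c') =
      -2 * ((s' * a - s * a') ^ 2 + (s' * b - s * b') ^ 2 + (s' * c - s * c') ^ 2) := by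
    simp only [heron, s, s']; ring
  have hexpand : heron (s' * a - s * a') (s' * b - s * b') (s' * c - s * c') =
      s' ^ 2 * S ^ 2 - 2 * (s * s') * heronPolar a b c a' b' c' + s ^ 2 * S' ^ 2 := by
    rw [hS, hS']; simp only [heron, heronPolar, s, s']; ring
  have hnonneg : 0 ≤ heron (s' * a - s * a') (s' * b - s * b') (s' * c - s * c') := by
    rw [hexpand]
    nlinarith [mul_le_mul_of_nonneg_left h hss, sq_nonneg (s' * S - s * S')]
  rw [hneg] at hnonneg
  refine ⟨?_, ?_, ?_⟩ <;>
    nlinarith [sq_nonneg (s' * a - s * a'), sq_nonneg (s' * b - s * b'),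
      sq_nonneg (s' * c - s * c')]

/-- Reverse Cauchy–Schwarz: were it to fail, the triples would be proportional by the lemma above,
and for proportional triples it is an equality. -/
lemma sqrt_heron_mul_sqrt_heron_le (hs : 0 < a + b + c) (hs' : 0 ≤ a' + b' + c')
    (hQ : 0 ≤ heron a b c) (hQ' : 0 ≤ heron a' b' c') :
    √(heron a b c) * √(heron a' b' c') ≤ heronPolar a b c a' b' c' := by
  by_contra! hlt
  obtain ⟨ha, hb, hc⟩ := proportional_of_heronPolar_le (mul_nonneg hs.le hs')
    (sq_sqrt hQ) (sq_sqrt hQ') hlt.le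
  generalize a + b + c = s at *
  generalize a' + b' + c' = s' at *
  have hpolar : s * heronPolar a b c a' b' c' = s' * heron a b c := by
    unfold heronPolar heron
    linear_combination -(b + c - a) * ha - (a + c - b) * hb - (a + b - c) * hc
  have hheron : (s * √(heron a' b' c')) ^ 2 = (s' * √(heron a b c)) ^ 2 := by
    rw [mul_pow, mul_pow, sq_sqrt hQ, sq_sqrt hQ']
    calc s ^ 2 * heron a' b' c' = heron (s * a') (s * b') (s * c') := by unfold heron; ring
      _ = s' ^ 2 * heron a b c := by rw [← ha, ← hb, ← hc]; unfold heron; ring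
  have hsqrt : s * √(heron a' b' c') = s' * √(heron a b c) :=
    (pow_left_inj₀ (by positivity) (by positivity) two_ne_zero).1 hheron
  have : s * (√(heron a b c) * √(heron a' b' c')) = s * heronPolar a b c a' b' c' := by
    rw [hpolar, mul_left_comm, hsqrt, mul_left_comm, mul_self_sqrt hQ]
  exact hlt.ne (mul_left_cancel₀ hs.ne' this).symm

lemma cot_arccos_eq_heronCot (hb : 0 < b) (hc : 0 < c) (hQ : 0 < heron a b c) :
    cot (arccos ((b + c - a) / (2 * (√b * √c)))) = heronCot a b c := by
  set D := 2 * (√b * √c)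
  have hD : 0 < D := by positivity
  have hD2 : D ^ 2 = 4 * b * c := by
    simp only [D, mul_pow, sq_sqrt hb.le, sq_sqrt hc.le]; ring
  have hsin : 1 - ((b + c - a) / D) ^ 2 = heron a b c / D ^ 2 := by
    field_simp; rw [hD2]; unfold heron; ring
  have hx : ((b + c - a) / D) ^ 2 < 1 := by
    have : 0 < heron a b c / D ^ 2 := by positivity
    linarith
  rw [cot_eq_cos_div_sin, cos_arccos (by nlinarith) (by nlinarith), sin_arccos, hsin,
    sqrt_div' _ (sq_nonneg D), sqrt_sq hD.le, heronCot, div_div_div_cancel_right₀ hD.ne']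

noncomputable def heronCotPairing (a b c a' b' c' : ℝ) : ℝ :=
  (heronCot a b c - heronCot a' b' c') * (a - a') +
    (heronCot b a c - heronCot b' a' c') * (b - b') +
    (heronCot c a b - heronCot c' a' b') * (c - c')

lemma heronCotPairing_eq (hQ : 0 < heron a b c) (hQ' : 0 < heron a' b' c') :
    heronCotPairing a b c a' b' c' =
      (√(heron a b c) + √(heron a' b' c')) *
        (√(heron a b c) * √(heron a' b' c') - heronPolar a b c a' b' c') /
          (√(heron a b c) * √(heron a' b' c')) := by
  have hS := sq_sqrt hQ.le
  have hS' := sq_sqrt hQ'.le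
  have hpos := sqrt_pos.2 hQ
  have hpos' := sqrt_pos.2 hQ'
  rw [heronCotPairing, heronCot, heronCot, heronCot, heronCot, heronCot, heronCot,
    @heron_swap a, @heron_rotate a, @heron_swap a', @heron_rotate a']
  generalize √(heron a b c) = S at *
  generalize √(heron a' b' c') = S' at *
  field_simp
  unfold heronPolar
  unfold heron at hS hS'
  linear_combination (-S') * hS - S * hS'

lemma heronCotPairing_nonpos (hs : 0 < a + b + c) (hs' : 0 ≤ a' + b' + c')
    (hQ : 0 < heron a b c) (hQ' : 0 < heron a' b' c') : heronCotPairing a b c a' b' c' ≤ 0 := by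
  have hle := sqrt_heron_mul_sqrt_heron_le hs hs' hQ.le hQ'.le
  rw [heronCotPairing_eq hQ hQ']
  exact div_nonpos_of_nonpos_of_nonneg
    (mul_nonpos_of_nonneg_of_nonpos (by positivity) (by linarith)) (by positivity)

lemma proportional_of_heronCotPairing_eq_zero (hss : 0 ≤ (a + b + c) * (a' + b' + c'))
    (hQ : 0 < heron a b c) (hQ' : 0 < heron a' b' c') (h : heronCotPairing a b c a' b' c' = 0) :
    (a' + b' + c') * a = (a + b + c) * a' ∧ (a' + b' + c') * b = (a + b + c) * b' ∧
      (a' + b' + c') * c = (a + b + c) * c' := by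
  have hS := sqrt_pos.2 hQ
  have hS' := sqrt_pos.2 hQ'
  rw [heronCotPairing_eq hQ hQ', div_eq_zero_iff, mul_eq_zero, sub_eq_zero] at h
  refine proportional_of_heronPolar_le hss (sq_sqrt hQ.le) (sq_sqrt hQ'.le) ?_
  rcases h with (h | h) | h
  · linarith
  · exact h.ge
  · exact absurd h (by positivity)

end Heron

noncomputable def facePairing (m : ℕ) (u v : Fin m → ℝ) (f : Finset (Fin m)) : ℝ :=
  ∑ e ∈ f, (cot (faceAngle m u f e) - cot (faceAngle m v f e)) * (u e - v e)

section Faces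

variable {m : ℕ} {F : Finset (Finset (Fin m))} {u v : Fin m → ℝ} {f : Finset (Fin m)}

lemma AdmissibleMetric.heron_pos (hu : AdmissibleMetric m F u) (hf : f ∈ F) {i j k : Fin m}
    (hi : i ∈ f) (hj : j ∈ f) (hk : k ∈ f) (hij : i ≠ j) (hik : i ≠ k) (hjk : j ≠ k) :
    0 < heron (2 * u i) (2 * u j) (2 * u k) := by
  have hsq : ∀ e, √(2 * u e) ^ 2 = 2 * u e := fun e => sq_sqrt (by linarith [hu.1 e])
  rw [← hsq i, ← hsq j, ← hsq k]
  exact heron_pos_of_lt_add (hu.2 f hf i hi j hj k hk hij hik hjk)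
    (hu.2 f hf j hj i hi k hk hij.symm hjk hik) (hu.2 f hf k hk i hi j hj hik.symm hjk.symm hij)

lemma AdmissibleMetric.cot_faceAngle (hu : AdmissibleMetric m F u) {i j k : Fin m}
    (hf : {i, j, k} ∈ F) (hij : i ≠ j) (hik : i ≠ k) (hjk : j ≠ k) :
    cot (faceAngle m u {i, j, k} i) = heronCot (2 * u i) (2 * u j) (2 * u k) := by
  have hQ := hu.heron_pos hf (by simp) (by simp) (by simp) hij hik hjk
  rw [faceAngle, erase_insert (by simp [hij, hik]), sum_pair hjk, prod_pair hjk]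
  exact cot_arccos_eq_heronCot (by linarith [hu.1 j]) (by linarith [hu.1 k]) hQ

lemma two_mul_facePairing (hu : AdmissibleMetric m F u) (hv : AdmissibleMetric m F v)
    {i j k : Fin m} (hf : {i, j, k} ∈ F) (hij : i ≠ j) (hik : i ≠ k) (hjk : j ≠ k) :
    2 * facePairing m u v {i, j, k} =
      heronCotPairing (2 * u i) (2 * u j) (2 * u k) (2 * v i) (2 * v j) (2 * v k) := by
  have hji : ({i, j, k} : Finset (Fin m)) = {j, i, k} := insert_comm i j {k}
  have hki : ({i, j, k} : Finset (Fin m)) = {k, i, j} := by rw [pair_comm j k, insert_comm]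
  have hcot : ∀ w, AdmissibleMetric m F w →
      cot (faceAngle m w {i, j, k} i) = heronCot (2 * w i) (2 * w j) (2 * w k) ∧
      cot (faceAngle m w {i, j, k} j) = heronCot (2 * w j) (2 * w i) (2 * w k) ∧
      cot (faceAngle m w {i, j, k} k) = heronCot (2 * w k) (2 * w i) (2 * w j) := by
    intro w hw
    refine ⟨hw.cot_faceAngle hf hij hik hjk, ?_, ?_⟩
    · rw [hji] at hf ⊢; exact hw.cot_faceAngle hf hij.symm hjk hik
    · rw [hki] at hf ⊢; exact hw.cot_faceAngle hf hik.symm hjk.symm hij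
  obtain ⟨hui, huj, huk⟩ := hcot u hu
  obtain ⟨hvi, hvj, hvk⟩ := hcot v hv
  rw [facePairing, sum_insert (by simp [hij, hik]), sum_pair hjk, hui, huj, huk, hvi, hvj, hvk,
    heronCotPairing]
  ring

lemma facePairing_nonpos (hu : AdmissibleMetric m F u) (hv : AdmissibleMetric m F v)
    (hf : f ∈ F) (hcard : f.card = 3) : facePairing m u v f ≤ 0 := by
  obtain ⟨i, j, k, hij, hik, hjk, rfl⟩ := card_eq_three.1 hcard
  have hpairing := two_mul_facePairing hu hv hf hij hik hjk
  have hnonpos := heronCotPairing_nonpos (by linarith [hu.1 i, hu.1 j, hu.1 k])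
    (by linarith [hv.1 i, hv.1 j, hv.1 k])
    (hu.heron_pos hf (by simp) (by simp) (by simp) hij hik hjk)
    (hv.heron_pos hf (by simp) (by simp) (by simp) hij hik hjk)
  linarith

lemma eq_mul_of_facePairing_eq_zero (hu : AdmissibleMetric m F u) (hv : AdmissibleMetric m F v)
    (hf : f ∈ F) (hcard : f.card = 3) (h : facePairing m u v f = 0) :
    ∀ e ∈ f, v e = (∑ a ∈ f, v a) / (∑ a ∈ f, u a) * u e := by
  obtain ⟨i, j, k, hij, hik, hjk, rfl⟩ := card_eq_three.1 hcard
  have hpairing := two_mul_facePairing hu hv hf hij hik hjk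
  rw [h, mul_zero, eq_comm] at hpairing
  have hsum : 0 < u i + u j + u k := by linarith [hu.1 i, hu.1 j, hu.1 k]
  obtain ⟨hi, hj, hk⟩ := proportional_of_heronCotPairing_eq_zero
    (mul_nonneg (by linarith) (by linarith [hv.1 i, hv.1 j, hv.1 k]))
    (hu.heron_pos hf (by simp) (by simp) (by simp) hij hik hjk)
    (hv.heron_pos hf (by simp) (by simp) (by simp) hij hik hjk) hpairing
  rw [sum_insert (by simp [hij, hik]), sum_pair hjk, sum_insert (by simp [hij, hik]), sum_pair hjk]
  simp only [mem_insert, mem_singleton, forall_eq_or_imp, forall_eq]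
  refine ⟨?_, ?_, ?_⟩ <;> rw [div_mul_eq_mul_div, eq_div_iff (by linarith)] <;> linarith

lemma sum_facePairing (F : Finset (Finset (Fin m))) (u v : Fin m → ℝ) :
    ∑ f ∈ F, facePairing m u v f =
      2 * ∑ e, (cotWeight m F u e - cotWeight m F v e) * (u e - v e) := by
  calc ∑ f ∈ F, facePairing m u v f
      = ∑ e, ∑ f ∈ F.filter (e ∈ ·), (cot (faceAngle m u f e) - cot (faceAngle m v f e)) *
          (u e - v e) := sum_comm' (by simp)
    _ = _ := by
      rw [mul_sum]
      refine sum_congr rfl fun e _ => ?_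
      rw [cotWeight, cotWeight, ← sum_mul, sum_sub_distrib]
      ring

end Faces

lemma SimpleGraph.Preconnected.eq_of_forall_adj_eq {V α : Type*} {G : SimpleGraph V}
    (hG : G.Preconnected) {φ : V → α} (hφ : ∀ x y, G.Adj x y → φ x = φ y) (x y : V) :
    φ x = φ y := by
  induction (SimpleGraph.reachable_iff_reflTransGen x y).1 (hG x y) with
  | refl => rfl
  | tail _ hadj ih => exact ih.trans (hφ _ _ hadj)

lemma exists_eq_mul_of_faceGraph_connected {m : ℕ} {F : Finset (Finset (Fin m))}
    (hconn : (faceGraph m F).Connected) (hcover : ∀ e : Fin m, ∃ f ∈ F, e ∈ f)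
    {u v : Fin m → ℝ} (hu : ∀ e, u e ≠ 0) (c : Finset (Fin m) → ℝ)
    (hc : ∀ f ∈ F, ∀ e ∈ f, v e = c f * u e) : ∃ t, ∀ e, v e = t * u e := by
  have hadj : ∀ f g : {f // f ∈ F}, (faceGraph m F).Adj f g → c f = c g := by
    rintro ⟨f, hf⟩ ⟨g, hg⟩ ⟨-, e, he⟩
    rw [mem_inter] at he
    exact mul_right_cancel₀ (hu e) ((hc f hf e he.1).symm.trans (hc g hg e he.2))
  obtain ⟨f₀⟩ := hconn.nonempty
  refine ⟨c f₀, fun e => ?_⟩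
  obtain ⟨f, hf, he⟩ := hcover e
  rw [hc f hf e he,
    hconn.preconnected.eq_of_forall_adj_eq (φ := fun f => c f) hadj ⟨f, hf⟩ f₀]

theorem metric_rigidity_normalized_general (m : ℕ)
    (F : Finset (Finset (Fin m))) (hF : ∀ f ∈ F, f.card = 3)
    (hcover : ∀ e : Fin m, ∃ f ∈ F, e ∈ f)
    (hconn : (faceGraph m F).Connected)
    (u v : Fin m → ℝ)
    (hu : AdmissibleMetric m F u) (hv : AdmissibleMetric m F v)
    (hsumu : ∑ e, u e = (m : ℝ)) (hsumv : ∑ e, v e = (m : ℝ))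
    (hw : ∀ e : Fin m, cotWeight m F u e = cotWeight m F v e) :
    u = v := by
  have hnonpos : ∀ f ∈ F, facePairing m u v f ≤ 0 :=
    fun f hf => facePairing_nonpos hu hv hf (hF f hf)
  have hzero : ∀ f ∈ F, facePairing m u v f = 0 := by
    refine (sum_eq_zero_iff_of_nonpos hnonpos).1 ?_
    simp [sum_facePairing, hw]
  obtain ⟨t, ht⟩ := exists_eq_mul_of_faceGraph_connected hconn hcover (fun e => (hu.1 e).ne') _
    fun f hf => eq_mul_of_facePairing_eq_zero hu hv hf (hF f hf) (hzero f hf)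
  funext e
  have hm : (m : ℝ) ≠ 0 := Nat.cast_ne_zero.2 (Fin.pos e).ne'
  have ht1 : t = 1 := by
    rw [← mul_left_inj' hm, one_mul]
    calc t * m = ∑ e, t * u e := by rw [← mul_sum, hsumu]
      _ = m := by rw [← hsumv]; exact sum_congr rfl fun e _ => (ht e).symm
  rw [ht e, ht1, one_mul]

/-- On a connected triangulated surface, two normalized admissible
metrics with the same cotangent edge weights are equal. -/
theorem metric_rigidity_normalized (m : ℕ) (hm : 0 < m)
    (F : Finset (Finset (Fin m))) (hF : ∀ f ∈ F, f.card = 3)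
    (hcover : ∀ e : Fin m, ∃ f ∈ F, e ∈ f)
    (hconn : (faceGraph m F).Connected)
    (u v : Fin m → ℝ)
    (hu : AdmissibleMetric m F u) (hv : AdmissibleMetric m F v)
    (hsumu : ∑ e, u e = (m : ℝ)) (hsumv : ∑ e, v e = (m : ℝ))
    (hw : ∀ e : Fin m, cotWeight m F u e = cotWeight m F v e) :
    u = v :=
  metric_rigidity_normalized_general m F hF hcover hconn u v hu hv hsumu hsumv hw
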